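/- For any polynomial p ∈ K[y₁,…,y_m] with p(r₁,…,r_m) = 0 for rational functions r_i = p_i/q_i, there exists k ∈ ℕ such that d^k · p(y₁,…,y_m), after substituting y_i ↦ p_i and clearing denominators with d = lcm(q₁,…,q_m), lies in the ideal generated by the polynomials q_i·y_i − p_i in K[x,y]. -/

import Mathlib

/-!
Work in `B = K[x,y] ⧸ J`. There `d·yᵢ` lies in the image of `K[x]`, because
`d·yᵢ - (d/qᵢ)·pᵢ = (d/qᵢ)(qᵢyᵢ - pᵢ)`; by induction on `f`, so does `d^k·f(y)` for some `k`,
say `d^k·f(y) ≡ g(x) mod J`. The evaluation `x ↦ x, yᵢ ↦ rᵢ` into the fraction field kills `J`,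
sends the left side to `d^k·f(r) = 0` and the right side to `g`; hence `g = 0`.
-/

open MvPolynomial

theorem Subalgebra.exists_pow_mul_aeval_mem {R A σ : Type*} [CommSemiring R] [CommSemiring A]
    [Algebra R A] (S : Subalgebra R A) {d : A} (hd : d ∈ S) {y : σ → A}
    (hy : ∀ i, d * y i ∈ S) (f : MvPolynomial σ R) : ∃ k : ℕ, d ^ k * aeval y f ∈ S := by
  induction f using MvPolynomial.induction_on with
  | C a => exact ⟨0, by simp⟩
  | add f g hf hg =>
    obtain ⟨k, hk⟩ := hf
    obtain ⟨l, hl⟩ := hg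
    refine ⟨k + l, ?_⟩
    have : d ^ (k + l) * aeval y (f + g) =
        d ^ l * (d ^ k * aeval y f) + d ^ k * (d ^ l * aeval y g) := by
      rw [map_add]; ring
    rw [this]
    exact S.add_mem (S.mul_mem (S.pow_mem hd l) hk) (S.mul_mem (S.pow_mem hd k) hl)
  | mul_X f i hf =>
    obtain ⟨k, hk⟩ := hf
    refine ⟨k + 1, ?_⟩
    have : d ^ (k + 1) * aeval y (f * X i) = (d ^ k * aeval y f) * (d * y i) := by
      rw [map_mul, aeval_X]; ring
    rw [this]
    exact S.mul_mem hk (hy i)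

namespace MvPolynomial

variable {R σ τ : Type*} [CommRing R]

theorem exists_pow_mul_rename_inr_sub_rename_inl_mem {p q : τ → MvPolynomial σ R}
    {d : MvPolynomial σ R} (hd : ∀ i, q i ∣ d) {J : Ideal (MvPolynomial (σ ⊕ τ) R)}
    (hJ : ∀ i, rename Sum.inl (q i) * X (Sum.inr i) - rename Sum.inl (p i) ∈ J)
    (f : MvPolynomial τ R) :
    ∃ (k : ℕ) (g : MvPolynomial σ R),
      rename Sum.inl d ^ k * rename Sum.inr f - rename Sum.inl g ∈ J := by
  choose c hc using hd
  let ι := (Ideal.Quotient.mkₐ R J).comp (rename (R := R) (Sum.inl : σ → σ ⊕ τ))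
  have hy : ∀ i, ι d * Ideal.Quotient.mk J (X (Sum.inr i)) ∈ ι.range := by
    refine fun i => ⟨c i * p i, (Ideal.Quotient.mk_eq_mk_iff_sub_mem _ _).mpr ?_⟩
    convert J.neg_mem (J.mul_mem_left (rename Sum.inl (c i)) (hJ i)) using 1
    simp only [RingHom.coe_coe, hc i, map_mul]
    ring
  have haeval : aeval (fun i => Ideal.Quotient.mk J (X (Sum.inr i))) f =
      Ideal.Quotient.mk J (rename Sum.inr f) := by
    rw [← Ideal.Quotient.mkₐ_eq_mk R, ← AlgHom.comp_apply]
    exact DFunLike.congr_fun (algHom_ext fun i => by simp) f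
  obtain ⟨k, g, hg⟩ := ι.range.exists_pow_mul_aeval_mem ⟨d, rfl⟩ hy f
  refine ⟨k, g, ?_⟩
  rw [← Ideal.Quotient.mk_eq_mk_iff_sub_mem]
  simpa [ι, haeval] using hg.symm

variable {S : Type*} [CommRing S]

theorem eval₂_sumElim_rename_inl (φ : MvPolynomial σ R →+* S) (r : τ → S)
    (g : MvPolynomial σ R) :
    eval₂ (φ.comp C) (Sum.elim (φ ∘ X) r) (rename Sum.inl g) = φ g := by
  rw [eval₂_rename, Sum.elim_comp_inl, ← eval₂_comp_left, eval₂_eta]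

theorem span_rename_mul_X_sub_le_ker (φ : MvPolynomial σ R →+* S)
    {p q : τ → MvPolynomial σ R} {r : τ → S} (hr : ∀ i, φ (q i) * r i = φ (p i)) :
    Ideal.span (Set.range fun i => rename Sum.inl (q i) * X (Sum.inr i) - rename Sum.inl (p i)) ≤
      RingHom.ker (eval₂Hom (φ.comp C) (Sum.elim (φ ∘ X) r)) := by
  rw [Ideal.span_le]
  rintro _ ⟨i, rfl⟩
  simp [eval₂_sumElim_rename_inl, hr i]

end MvPolynomial

theorem stmt_5_general (K : Type*) [Field K] (n m : ℕ)
    (p q : Fin m → MvPolynomial (Fin n) K) (hq : ∀ i, q i ≠ 0)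
    (d : MvPolynomial (Fin n) K)
    (hd₁ : ∀ i, q i ∣ d)
    (F : Type*) [Field F] [Algebra (MvPolynomial (Fin n) K) F]
    [IsFractionRing (MvPolynomial (Fin n) K) F]
    (r : Fin m → F)
    (hr : ∀ i, r i = algebraMap (MvPolynomial (Fin n) K) F (p i) /
                    algebraMap (MvPolynomial (Fin n) K) F (q i))
    (J : Ideal (MvPolynomial (Fin n ⊕ Fin m) K))
    (hJ : J = Ideal.span (Set.range fun i : Fin m =>
      rename Sum.inl (q i) * X (Sum.inr i) - rename Sum.inl (p i))) :
    ∀ f : MvPolynomial (Fin m) K,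
      eval₂ ((algebraMap (MvPolynomial (Fin n) K) F).comp (C : K →+* _)) r f = 0 →
        ∃ k : ℕ, (rename Sum.inl d) ^ k * rename Sum.inr f ∈ J := by
  intro f hf
  subst hJ
  have hinj := IsFractionRing.injective (MvPolynomial (Fin n) K) F
  obtain ⟨k, g, hmem⟩ :=
    exists_pow_mul_rename_inr_sub_rename_inl_mem hd₁
      (fun i => Ideal.subset_span (Set.mem_range_self i)) f
  have hqr : ∀ i, algebraMap _ F (q i) * r i = algebraMap _ F (p i) := fun i => by
    rw [hr i, mul_div_cancel₀ _ ((map_ne_zero_iff _ hinj).mpr (hq i))]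
  have hg : algebraMap _ F g = 0 := by
    have h := RingHom.mem_ker.mp (span_rename_mul_X_sub_le_ker _ hqr hmem)
    simp only [coe_eval₂Hom, map_sub, map_mul, eval₂_sumElim_rename_inl] at h
    rwa [eval₂_rename, Sum.elim_comp_inr, hf, mul_zero, zero_sub, neg_eq_zero] at h
  rw [(map_eq_zero_iff _ hinj).mp hg, map_zero, sub_zero] at hmem
  exact ⟨k, hmem⟩

/-- if `f(r₁,…,r_m) = 0` for rational functions `rᵢ = pᵢ/qᵢ`, then
some power of `d = lcm(q₁,…,q_m)` times `f` (denominators cleared) lies in the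
ideal generated by the `qᵢ·yᵢ - pᵢ` in `K[x,y]`. -/
theorem stmt_5 (K : Type*) [Field K] (n m : ℕ)
    (p q : Fin m → MvPolynomial (Fin n) K) (hq : ∀ i, q i ≠ 0)
    (d : MvPolynomial (Fin n) K)
    (hd₁ : ∀ i, q i ∣ d)
    (hd₂ : ∀ e : MvPolynomial (Fin n) K, (∀ i, q i ∣ e) → d ∣ e)
    (F : Type*) [Field F] [Algebra (MvPolynomial (Fin n) K) F]
    [IsFractionRing (MvPolynomial (Fin n) K) F]
    (r : Fin m → F)
    (hr : ∀ i, r i = algebraMap (MvPolynomial (Fin n) K) F (p i) /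
                    algebraMap (MvPolynomial (Fin n) K) F (q i))
    (J : Ideal (MvPolynomial (Fin n ⊕ Fin m) K))
    (hJ : J = Ideal.span (Set.range fun i : Fin m =>
      rename Sum.inl (q i) * X (Sum.inr i) - rename Sum.inl (p i))) :
    ∀ f : MvPolynomial (Fin m) K,
      eval₂ ((algebraMap (MvPolynomial (Fin n) K) F).comp (C : K →+* _)) r f = 0 →
        ∃ k : ℕ, (rename Sum.inl d) ^ k * rename Sum.inr f ∈ J :=
  stmt_5_general K n m p q hq d hd₁ F r hr J hJ
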